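/- The canonical model order is locally linear: for complete types Φ,Ψ,Θ (with Φ≤Ψ meaning Φ⁻⊆Ψ⁻ and Φ⁺⊇Ψ⁺), if Φ≤Ψ and Φ≤Θ then Ψ and Θ are comparable, and if Ψ≤Φ and Θ≤Φ then Ψ and Θ are comparable. -/

import Mathlib

/-- Formulas of the Gödel temporal language. -/
inductive GF where
  | var : Nat → GF
  | and : GF → GF → GF
  | or : GF → GF → GF
  | imp : GF → GF → GF
  | coimp : GF → GF → GF
  | next : GF → GF
  | dia : GF → GF
  | box : GF → GF
deriving DecidableEq

/-- ⊥ := p ⇐ p -/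
def GF.bot : GF := .coimp (.var 0) (.var 0)
/-- ⊤ := p ⇒ p -/
def GF.top : GF := .imp (.var 0) (.var 0)
/-- ¬φ := φ ⇒ ⊥ -/
def GF.neg (φ : GF) : GF := .imp φ .bot
/-- φ ⟺ ψ := (φ⇒ψ) ∧ (ψ⇒φ) -/
def GF.iffF (φ ψ : GF) : GF := .and (.imp φ ψ) (.imp ψ φ)

/-- The deductive calculus GTL. Intuitionistic tautologies are generated by a
standard Hilbert-style axiomatization of intuitionistic propositional logic. -/
inductive GTL : GF → Prop where
  -- intuitionistic axioms
  | i1 (φ ψ : GF) : GTL (.imp φ (.imp ψ φ))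
  | i2 (φ ψ χ : GF) : GTL (.imp (.imp φ (.imp ψ χ)) (.imp (.imp φ ψ) (.imp φ χ)))
  | i3 (φ ψ : GF) : GTL (.imp (.and φ ψ) φ)
  | i4 (φ ψ : GF) : GTL (.imp (.and φ ψ) ψ)
  | i5 (φ ψ : GF) : GTL (.imp φ (.imp ψ (.and φ ψ)))
  | i6 (φ ψ : GF) : GTL (.imp φ (.or φ ψ))
  | i7 (φ ψ : GF) : GTL (.imp ψ (.or φ ψ))
  | i8 (φ ψ χ : GF) : GTL (.imp (.imp φ χ) (.imp (.imp ψ χ) (.imp (.or φ ψ) χ)))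
  | i9 (φ : GF) : GTL (.imp .bot φ)
  -- H-B axioms and rules
  | hb1 (φ ψ : GF) : GTL (.imp φ (.or ψ (.coimp φ ψ)))
  | hbMon {φ ψ : GF} (θ : GF) : GTL (.imp φ ψ) → GTL (.imp (.coimp φ θ) (.coimp ψ θ))
  | hbDis {φ ψ γ : GF} : GTL (.imp φ (.or ψ γ)) → GTL (.imp (.coimp φ ψ) γ)
  -- linearity axioms
  | lin (φ ψ : GF) : GTL (.or (.imp φ ψ) (.imp ψ φ))
  | colin (φ ψ : GF) : GTL (GF.neg (.and (.coimp φ ψ) (.coimp ψ φ)))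
  -- temporal axioms
  | nBot : GTL (GF.neg (.next .bot))
  | nOr (φ ψ : GF) : GTL (.imp (.next (.or φ ψ)) (.or (.next φ) (.next ψ)))
  | nAnd (φ ψ : GF) : GTL (.imp (.and (.next φ) (.next ψ)) (.next (.and φ ψ)))
  | nImp (φ ψ : GF) : GTL (GF.iffF (.next (.imp φ ψ)) (.imp (.next φ) (.next ψ)))
  | kBox (φ ψ : GF) : GTL (.imp (.box (.imp φ ψ)) (.imp (.box φ) (.box ψ)))
  | kDia (φ ψ : GF) : GTL (.imp (.box (.imp φ ψ)) (.imp (.dia φ) (.dia ψ)))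
  | boxFix (φ : GF) : GTL (.imp (.box φ) (.and φ (.next (.box φ))))
  | diaFix (φ : GF) : GTL (.imp (.or φ (.next (.dia φ))) (.dia φ))
  | indBox (φ : GF) : GTL (.imp (.box (.imp φ (.next φ))) (.imp φ (.box φ)))
  | indDia (φ : GF) : GTL (.imp (.box (.imp (.next φ) φ)) (.imp (.dia φ) φ))
  -- back–up confluence axiom
  | backup (φ ψ : GF) : GTL (.imp (.next (.coimp φ ψ)) (.coimp (.next φ) (.next ψ)))
  -- standard modal rules
  | mp {φ ψ : GF} : GTL φ → GTL (.imp φ ψ) → GTL ψ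
  | necN {φ : GF} : GTL φ → GTL (.next φ)
  | necBox {φ : GF} : GTL φ → GTL (.box φ)

/-- Finite conjunction (⋀∅ = ⊤). -/
def GF.conj : List GF → GF := fun l => l.foldr .and .top
/-- Finite disjunction (⋁∅ = ⊥). -/
def GF.disj : List GF → GF := fun l => l.foldr .or .bot

/-- Gentzen-style consequence: Γ ⊢ Δ iff ⋀Γ' ⇒ ⋁Δ' ∈ GTL for some finite
Γ' ⊆ Γ, Δ' ⊆ Δ. -/
def GSeq (Γ Δ : Set GF) : Prop :=
  ∃ l m : List GF, (∀ φ ∈ l, φ ∈ Γ) ∧ (∀ φ ∈ m, φ ∈ Δ) ∧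
    GTL (.imp (GF.conj l) (GF.disj m))

/-- A complete type: a consistent saturated pair. -/
def CompleteType (P N : Set GF) : Prop :=
  ¬ GSeq P N ∧ ∀ φ : GF, φ ∈ P ∨ φ ∈ N

/-- The canonical order: Φ ≤ Ψ iff Φ⁻ ⊆ Ψ⁻ and Φ⁺ ⊇ Ψ⁺. -/
def TLe (Φ Ψ : Set GF × Set GF) : Prop := Φ.2 ⊆ Ψ.2 ∧ Ψ.1 ⊆ Φ.1

/-- The canonical successor: S(Φ) = (⊖Φ⁺, ⊖Φ⁻). -/
def TSucc (Φ : Set GF × Set GF) : Set GF × Set GF :=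
  ({φ | GF.next φ ∈ Φ.1}, {φ | GF.next φ ∈ Φ.2})

/-!
If `Ψ` and `Θ` are incomparable, saturation gives `φ ∈ Ψ⁻ ∩ Θ⁺` and `ψ ∈ Θ⁻ ∩ Ψ⁺`. By
consistency, `φ ⇐ ψ ∈ Θ⁺` and `ψ ⇐ φ ∈ Ψ⁺`, while `φ ⇒ ψ ∈ Θ⁻` and `ψ ⇒ φ ∈ Ψ⁻`. A common
lower bound `Φ` then has both co-implications in `Φ⁺`, refuting `¬((φ⇐ψ)∧(ψ⇐φ))`; a common
upper bound has both implications in `Φ⁻`, refuting `(φ⇒ψ)∨(ψ⇒φ)`.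
-/

namespace GTL

theorem imp_trans {a b c : GF} (hab : GTL (.imp a b)) (hbc : GTL (.imp b c)) :
    GTL (.imp a c) :=
  mp hab (mp (mp hbc (i1 _ a)) (i2 a b c))

theorem imp_mp {a b c : GF} (hbc : GTL (.imp a (.imp b c))) (hb : GTL (.imp a b)) :
    GTL (.imp a c) :=
  mp hb (mp hbc (i2 a b c))

theorem imp_and {a b c : GF} (hb : GTL (.imp a b)) (hc : GTL (.imp a c)) :
    GTL (.imp a (.and b c)) :=
  imp_mp (imp_trans hb (i5 b c)) hc

theorem or_imp {a b c : GF} (ha : GTL (.imp a c)) (hb : GTL (.imp b c)) :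
    GTL (.imp (.or a b) c) :=
  mp hb (mp ha (i8 a b c))

end GTL

namespace GSeq

variable {P N : Set GF} {φ ψ : GF}

theorem of_mem_of_mem (hP : φ ∈ P) (hN : φ ∈ N) : GSeq P N :=
  ⟨[φ], [φ], by simpa using hP, by simpa using hN,
    GTL.imp_trans (GTL.i3 φ .top) (GTL.i6 φ .bot)⟩

theorem of_imp_mem (hφ : φ ∈ P) (himp : GF.imp φ ψ ∈ P) (hψ : ψ ∈ N) : GSeq P N := by
  refine ⟨[.imp φ ψ, φ], [ψ], by simp [hφ, himp], by simpa using hψ, ?_⟩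
  show GTL (.imp (.and (.imp φ ψ) (.and φ .top)) (.or ψ .bot))
  exact GTL.imp_trans
    (GTL.imp_mp (GTL.i3 _ _) (GTL.imp_trans (GTL.i4 _ _) (GTL.i3 φ .top))) (GTL.i6 ψ .bot)

theorem of_coimp_mem (hφ : φ ∈ P) (hψ : ψ ∈ N) (hcoimp : GF.coimp φ ψ ∈ N) :
    GSeq P N := by
  refine ⟨[φ], [ψ, .coimp φ ψ], by simpa using hφ, by simp [hψ, hcoimp], ?_⟩
  show GTL (.imp (.and φ .top) (.or ψ (.or (.coimp φ ψ) .bot)))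
  exact GTL.imp_trans (GTL.i3 φ .top) <| GTL.imp_trans (GTL.hb1 φ ψ) <|
    GTL.or_imp (GTL.i6 _ _) (GTL.imp_trans (GTL.i6 _ .bot) (GTL.i7 ψ _))

theorem of_coimp_mem_of_coimp_mem (h₁ : GF.coimp φ ψ ∈ P) (h₂ : GF.coimp ψ φ ∈ P) :
    GSeq P N := by
  refine ⟨[.coimp φ ψ, .coimp ψ φ], [], by simp [h₁, h₂], by simp, ?_⟩
  show GTL (.imp (.and (.coimp φ ψ) (.and (.coimp ψ φ) .top)) .bot)
  exact GTL.imp_trans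
    (GTL.imp_and (GTL.i3 _ _) (GTL.imp_trans (GTL.i4 _ _) (GTL.i3 _ _))) (GTL.colin φ ψ)

theorem of_imp_mem_of_imp_mem (h₁ : GF.imp φ ψ ∈ N) (h₂ : GF.imp ψ φ ∈ N) :
    GSeq P N := by
  refine ⟨[], [.imp φ ψ, .imp ψ φ], by simp, by simp [h₁, h₂], ?_⟩
  show GTL (.imp .top (.or (.imp φ ψ) (.or (.imp ψ φ) .bot)))
  have hdisj : GTL (.or (.imp φ ψ) (.or (.imp ψ φ) .bot)) :=
    GTL.mp (GTL.lin φ ψ) <|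
      GTL.or_imp (GTL.i6 _ _) (GTL.imp_trans (GTL.i6 _ .bot) (GTL.i7 _ _))
  exact GTL.mp hdisj (GTL.i1 _ _)

end GSeq

namespace CompleteType

variable {P N : Set GF} {φ ψ : GF}

theorem coimp_mem (h : CompleteType P N) (hφ : φ ∈ P) (hψ : ψ ∈ N) :
    GF.coimp φ ψ ∈ P :=
  (h.2 _).resolve_right fun hN => h.1 (GSeq.of_coimp_mem hφ hψ hN)

theorem imp_mem (h : CompleteType P N) (hφ : φ ∈ P) (hψ : ψ ∈ N) :
    GF.imp φ ψ ∈ N :=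
  (h.2 _).resolve_left fun hP => h.1 (GSeq.of_imp_mem hφ hP hψ)

theorem exists_mem_of_not_tLe {Ψ Θ : Set GF × Set GF} (hΨ : CompleteType Ψ.1 Ψ.2)
    (hΘ : CompleteType Θ.1 Θ.2) (h : ¬ TLe Ψ Θ) : ∃ φ ∈ Ψ.2, φ ∈ Θ.1 := by
  simp only [TLe, not_and_or, Set.not_subset] at h
  rcases h with ⟨φ, hΨφ, hΘφ⟩ | ⟨φ, hΘφ, hΨφ⟩
  · exact ⟨φ, hΨφ, (hΘ.2 φ).resolve_right hΘφ⟩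
  · exact ⟨φ, (hΨ.2 φ).resolve_left hΨφ, hΘφ⟩

end CompleteType

open CompleteType in
theorem tLe_total_of_common_lowerBound {Φ Ψ Θ : Set GF × Set GF}
    (hΦ : CompleteType Φ.1 Φ.2) (hΨ : CompleteType Ψ.1 Ψ.2) (hΘ : CompleteType Θ.1 Θ.2)
    (hΦΨ : TLe Φ Ψ) (hΦΘ : TLe Φ Θ) : TLe Ψ Θ ∨ TLe Θ Ψ := by
  by_contra! hinc
  obtain ⟨φ, hΨφ, hΘφ⟩ := exists_mem_of_not_tLe hΨ hΘ hinc.1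
  obtain ⟨ψ, hΘψ, hΨψ⟩ := exists_mem_of_not_tLe hΘ hΨ hinc.2
  exact hΦ.1 <| GSeq.of_coimp_mem_of_coimp_mem
    (hΦΘ.2 (hΘ.coimp_mem hΘφ hΘψ)) (hΦΨ.2 (hΨ.coimp_mem hΨψ hΨφ))

open CompleteType in
theorem tLe_total_of_common_upperBound {Φ Ψ Θ : Set GF × Set GF}
    (hΦ : CompleteType Φ.1 Φ.2) (hΨ : CompleteType Ψ.1 Ψ.2) (hΘ : CompleteType Θ.1 Θ.2)
    (hΨΦ : TLe Ψ Φ) (hΘΦ : TLe Θ Φ) : TLe Ψ Θ ∨ TLe Θ Ψ := by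
  by_contra! hinc
  obtain ⟨φ, hΨφ, hΘφ⟩ := exists_mem_of_not_tLe hΨ hΘ hinc.1
  obtain ⟨ψ, hΘψ, hΨψ⟩ := exists_mem_of_not_tLe hΘ hΨ hinc.2
  exact hΦ.1 <| GSeq.of_imp_mem_of_imp_mem
    (hΘΦ.1 (hΘ.imp_mem hΘφ hΘψ)) (hΨΦ.1 (hΨ.imp_mem hΨψ hΨφ))

/-- The canonical order on complete types is locally linear. -/
theorem stmt15 (Φ Ψ Θ : Set GF × Set GF)
    (hΦ : CompleteType Φ.1 Φ.2) (hΨ : CompleteType Ψ.1 Ψ.2)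
    (hΘ : CompleteType Θ.1 Θ.2) :
    (TLe Φ Ψ → TLe Φ Θ → TLe Ψ Θ ∨ TLe Θ Ψ) ∧
    (TLe Ψ Φ → TLe Θ Φ → TLe Ψ Θ ∨ TLe Θ Ψ) :=
  ⟨tLe_total_of_common_lowerBound hΦ hΨ hΘ, tLe_total_of_common_upperBound hΦ hΨ hΘ⟩
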